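/- arXiv:1003.1431 — 2 statements merged into one kernel-verified Lean document; each statement's English description precedes it below -/
import Mathlib

section
/- Let A be a finite-dimensional commutative local ℂ-algebra with maximal ideal m and residue field ℂ, regarded as a normed ℂ-algebra. Let a ∈ m (so a is nilpotent), let n be a nonzero integer, let ε > 0, and let γ(t) = ε·e^{2πit}. Then the iterated integral of dx/x followed by d(1 − a x^n)/(1 − a x^n) along γ equals 2πi·log(1 − a ε^n); explicitly, ∫_{0 ≤ t₁ ≤ t₂ ≤ 1} (γ'(t₁)/γ(t₁))·(−a·n·γ(t₂)^{n−1}·γ'(t₂))·(1 − a·γ(t₂)^n)⁻¹ dt₁ dt₂ = 2πi·log(1 − a ε^n). -/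
open MeasureTheory

/-- The simplex `{0 ≤ t 1 ≤ ⋯ ≤ t k ≤ 1}` in `[0,1]^k`. -/
def orderedSimplex (k : ℕ) : Set (Fin k → ℝ) :=
  {t | (∀ i, t i ∈ Set.Icc (0 : ℝ) 1) ∧ ∀ i j : Fin k, i ≤ j → t i ≤ t j}

/-- The circle of radius `ε` around `0`, parametrized by `t ↦ ε e^{2πit}`. -/
noncomputable def circlePath (ε : ℝ) : ℝ → ℂ :=
  fun t => (ε : ℂ) * Complex.exp (2 * Real.pi * Complex.I * (t : ℂ))

/-- `log (1 - u) := -∑_{k ≥ 1} u^k / k`; for `u` nilpotent this is a finite sum. -/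
noncomputable def logOneSub {A : Type*} [NormedCommRing A] [NormedAlgebra ℂ A] (u : A) : A :=
  -∑' k : ℕ, ((k + 1 : ℂ)⁻¹) • u ^ (k + 1)

/-! Along `γ` the form `dx/x` is `2πi dt`, and since `a γ^n` is nilpotent the second form is a
finite geometric series `-2πi n ∑_{k ≥ 1} (a ε^n)^k e^{2πi n k t} dt`. Over the simplex
`∫₀¹ ∫ₓ¹ e^{λ y} dy dx = λ⁻¹` whenever `e^λ = 1`, so with `λ = 2πi n k` the `k`-th term
contributes `-2πi (a ε^n)^k / k`, and these sum to `2πi log (1 - a ε^n)`. -/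

theorem mem_orderedSimplex_two {t : Fin 2 → ℝ} :
    t ∈ orderedSimplex 2 ↔ 0 ≤ t 0 ∧ t 0 ≤ t 1 ∧ t 1 ≤ 1 := by
  constructor
  · rintro ⟨hIcc, hmono⟩
    exact ⟨(hIcc 0).1, hmono 0 1 (by decide), (hIcc 1).2⟩
  · rintro ⟨h0, h01, h1⟩
    refine ⟨fun i => ?_, fun i j hij => ?_⟩
    · fin_cases i <;> constructor <;> simp <;> linarith
    · fin_cases i <;> fin_cases j <;> simp_all

theorem isCompact_orderedSimplex_two : IsCompact (orderedSimplex 2) := by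
  have hclosed : IsClosed (orderedSimplex 2) := by
    simp only [orderedSimplex, Set.ofPred_and, Set.ofPred_forall]
    refine .inter (isClosed_iInter fun i => ?_)
      (isClosed_iInter fun i => isClosed_iInter fun j => ?_)
    · exact isClosed_Icc.preimage (continuous_apply i)
    · exact isClosed_iInter fun _ => isClosed_le (continuous_apply i) (continuous_apply j)
  refine (isCompact_univ_pi fun _ => isCompact_Icc (a := (0 : ℝ)) (b := 1)).of_isClosed_subset
    hclosed ?_
  exact fun t ht i _ => ht.1 i

theorem finTwoArrow_symm_preimage_orderedSimplex :
    MeasurableEquiv.finTwoArrow.symm ⁻¹' orderedSimplex 2 =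
      {p : ℝ × ℝ | 0 ≤ p.1 ∧ p.1 ≤ p.2 ∧ p.2 ≤ 1} := by
  ext p
  exact mem_orderedSimplex_two

theorem setIntegral_triangle {E : Type*} [NormedAddCommGroup E] [NormedSpace ℝ E]
    {G : ℝ × ℝ → E} (hG : Continuous G) :
    ∫ p in {p : ℝ × ℝ | 0 ≤ p.1 ∧ p.1 ≤ p.2 ∧ p.2 ≤ 1}, G p =
      ∫ x in (0 : ℝ)..1, ∫ y in x..1, G (x, y) := by
  set T := {p : ℝ × ℝ | 0 ≤ p.1 ∧ p.1 ≤ p.2 ∧ p.2 ≤ 1}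
  have hT : IsCompact T := by
    have hsub : T ⊆ Set.Icc (0 : ℝ) 1 ×ˢ Set.Icc (0 : ℝ) 1 := fun p ⟨h0, h01, h1⟩ =>
      ⟨⟨h0, h01.trans h1⟩, h0.trans h01, h1⟩
    refine (isCompact_Icc.prod isCompact_Icc).of_isClosed_subset ?_ hsub
    exact (isClosed_le continuous_const continuous_fst).inter
      ((isClosed_le continuous_fst continuous_snd).inter
        (isClosed_le continuous_snd continuous_const))
  have hslice : ∀ x, ∫ y, T.indicator G (x, y) =
      (Set.Icc 0 1).indicator (fun x => ∫ y in x..1, G (x, y)) x := by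
    intro x
    by_cases hx : x ∈ Set.Icc (0 : ℝ) 1
    · have : (fun y => T.indicator G (x, y)) = (Set.Icc x 1).indicator (fun y => G (x, y)) := by
        ext y
        simp only [Set.indicator, T, Set.mem_ofPred_eq, Set.mem_Icc, hx.1, true_and]
      rw [this, integral_indicator measurableSet_Icc, integral_Icc_eq_integral_Ioc,
        ← intervalIntegral.integral_of_le hx.2, Set.indicator_of_mem hx]
    · have : (fun y => T.indicator G (x, y)) = 0 := by
        ext y
        refine Set.indicator_of_notMem (fun hp => hx ⟨hp.1, hp.2.1.trans hp.2.2⟩) _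
      rw [this, Pi.zero_def, integral_zero, Set.indicator_of_notMem hx]
  rw [← integral_indicator hT.measurableSet, Measure.volume_eq_prod,
    integral_prod _
      ((hG.continuousOn.integrableOn_compact hT).integrable_indicator hT.measurableSet)]
  simp only [hslice, integral_indicator measurableSet_Icc, integral_Icc_eq_integral_Ioc,
    ← intervalIntegral.integral_of_le zero_le_one]

theorem setIntegral_orderedSimplex_two {E : Type*} [NormedAddCommGroup E] [NormedSpace ℝ E]
    {F : (Fin 2 → ℝ) → E} (hF : Continuous F) :
    ∫ t in orderedSimplex 2, F t = ∫ x in (0 : ℝ)..1, ∫ y in x..1, F ![x, y] := by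
  rw [← (volume_preserving_finTwoArrow ℝ).symm.setIntegral_preimage_emb
    MeasurableEquiv.finTwoArrow.symm.measurableEmbedding, finTwoArrow_symm_preimage_orderedSimplex]
  exact setIntegral_triangle (hF.comp Homeomorph.finTwoArrow.symm.continuous)

theorem integral_integral_exp_mul_of_exp_eq_one {c : ℂ} (hc : c ≠ 0) (hc1 : Complex.exp c = 1) :
    ∫ x in (0 : ℝ)..1, ∫ y in x..1, Complex.exp (c * y) = c⁻¹ := by
  simp only [integral_exp_mul_complex hc, Complex.ofReal_one, mul_one, hc1]
  rw [intervalIntegral.integral_div, intervalIntegral.integral_sub intervalIntegrable_const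
    ((by fun_prop : Continuous fun x : ℝ => Complex.exp (c * x)).intervalIntegrable 0 1),
    integral_exp_mul_complex hc]
  simp [hc1]

theorem setIntegral_orderedSimplex_two_exp {m : ℤ} (hm : m ≠ 0) :
    ∫ t in orderedSimplex 2, Complex.exp (2 * Real.pi * Complex.I * m * t 1) =
      (2 * Real.pi * Complex.I * m)⁻¹ := by
  rw [setIntegral_orderedSimplex_two (by fun_prop)]
  refine integral_integral_exp_mul_of_exp_eq_one ?_ ?_
  · simp [hm, Real.pi_ne_zero]
  · rw [mul_comm]
    exact Complex.exp_int_mul_two_pi_mul_I m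

theorem logOneSub_eq_sum {A : Type*} [NormedCommRing A] [NormedAlgebra ℂ A] {u : A} {N : ℕ}
    (hN : u ^ N = 0) :
    logOneSub u = -∑ k ∈ Finset.range N, ((k + 1 : ℂ)⁻¹) • u ^ (k + 1) := by
  rw [logOneSub, tsum_eq_sum fun k hk => ?_]
  rw [pow_eq_zero_of_le (by simp at hk; omega) hN, smul_zero]

theorem circlePath_ne_zero {ε : ℝ} (hε : ε ≠ 0) (t : ℝ) : circlePath ε t ≠ 0 :=
  mul_ne_zero (Complex.ofReal_ne_zero.mpr hε) (Complex.exp_ne_zero _)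

theorem deriv_circlePath (ε t : ℝ) :
    deriv (circlePath ε) t = 2 * Real.pi * Complex.I * circlePath ε t := by
  have h := ((((hasDerivAt_id (t : ℂ)).const_mul (2 * Real.pi * Complex.I)).cexp).const_mul
    (ε : ℂ)).comp_ofReal
  exact h.deriv.trans (by simp only [circlePath, id, mul_one]; ring)

theorem circlePath_zpow (ε t : ℝ) (m : ℤ) :
    circlePath ε t ^ m = (ε : ℂ) ^ m * Complex.exp (2 * Real.pi * Complex.I * m * t) := by
  rw [circlePath, mul_zpow, ← Complex.exp_int_mul]
  ring_nf

theorem Ring.inverse_one_sub_eq_geom_sum {R : Type*} [Ring R] {u : R} {N : ℕ} (hN : u ^ N = 0) :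
    Ring.inverse (1 - u) = ∑ k ∈ Finset.range N, u ^ k := by
  rw [← mul_one (Ring.inverse _),
    Ring.inverse_mul_eq_iff_eq_mul _ _ _ (IsNilpotent.isUnit_one_sub ⟨N, hN⟩), mul_neg_geom_sum,
    hN, sub_zero]

theorem Ring.mul_inverse_one_sub_eq_sum {R : Type*} [Ring R] {u : R} {N : ℕ} (hN : u ^ N = 0) :
    u * Ring.inverse (1 - u) = ∑ k ∈ Finset.range N, u ^ (k + 1) := by
  simp only [Ring.inverse_one_sub_eq_geom_sum hN, Finset.mul_sum, pow_succ']

theorem logDeriv_circlePath {ε : ℝ} (hε : ε ≠ 0) (t : ℝ) :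
    deriv (circlePath ε) t / circlePath ε t = 2 * Real.pi * Complex.I := by
  rw [deriv_circlePath, mul_div_cancel_right₀ _ (circlePath_ne_zero hε t)]

theorem deriv_circlePath_zpow {ε : ℝ} (hε : ε ≠ 0) (n : ℤ) (t : ℝ) :
    (n : ℂ) * circlePath ε t ^ (n - 1) * deriv (circlePath ε) t =
      2 * Real.pi * Complex.I * n * circlePath ε t ^ n := by
  rw [deriv_circlePath, zpow_sub_one₀ (circlePath_ne_zero hε t)]
  field_simp [circlePath_ne_zero hε t]

section

variable {A : Type*} [CommRing A] [Algebra ℂ A]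

theorem mul_algebraMap_circlePath_zpow (a : A) (ε t : ℝ) (n : ℤ) :
    a * algebraMap ℂ A (circlePath ε t ^ n) =
      Complex.exp (2 * Real.pi * Complex.I * n * t) •
        (a * algebraMap ℂ A ((ε : ℂ) ^ n)) := by
  rw [circlePath_zpow, map_mul, Algebra.smul_def]
  ring

theorem circlePath_integrand_eq_sum {ε : ℝ} (hε : ε ≠ 0) (a : A) (n : ℤ) {N : ℕ}
    (hN : (a * algebraMap ℂ A ((ε : ℂ) ^ n)) ^ N = 0) (s t : ℝ) :
    algebraMap ℂ A (deriv (circlePath ε) s / circlePath ε s) *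
        (-a * algebraMap ℂ A ((n : ℂ) * circlePath ε t ^ (n - 1) * deriv (circlePath ε) t) *
          Ring.inverse (1 - a * algebraMap ℂ A (circlePath ε t ^ n))) =
      ∑ k ∈ Finset.range N,
        (-((2 * Real.pi * Complex.I) ^ 2 * n) *
          Complex.exp (2 * Real.pi * Complex.I * ((n * (k + 1) : ℤ) : ℂ) * t)) •
          (a * algebraMap ℂ A ((ε : ℂ) ^ n)) ^ (k + 1) := by
  set v := a * algebraMap ℂ A ((ε : ℂ) ^ n)
  set u := a * algebraMap ℂ A (circlePath ε t ^ n)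
  have hu : u = Complex.exp (2 * Real.pi * Complex.I * n * t) • v :=
    mul_algebraMap_circlePath_zpow a ε t n
  have huN : u ^ N = 0 := by rw [hu, smul_pow, hN, smul_zero]
  calc algebraMap ℂ A (deriv (circlePath ε) s / circlePath ε s) *
        (-a * algebraMap ℂ A ((n : ℂ) * circlePath ε t ^ (n - 1) * deriv (circlePath ε) t) *
          Ring.inverse (1 - u))
      = -((2 * Real.pi * Complex.I) ^ 2 * n) • (u * Ring.inverse (1 - u)) := by
        rw [logDeriv_circlePath hε, deriv_circlePath_zpow hε, Algebra.smul_def]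
        generalize 2 * (Real.pi : ℂ) * Complex.I = c
        simp only [u, map_mul, map_neg, map_pow]
        ring
    _ = _ := by
        rw [Ring.mul_inverse_one_sub_eq_sum huN, Finset.smul_sum]
        refine Finset.sum_congr rfl fun k _ => ?_
        rw [hu, smul_pow, smul_smul, ← Complex.exp_nat_mul]
        push_cast
        ring_nf

end

theorem iteratedIntegral_dx_div_x_logDeriv_general
    (A : Type*) [NormedCommRing A] [NormedAlgebra ℂ A] [FiniteDimensional ℂ A]
    [IsLocalRing A]
    (a : A) (ha : a ∈ IsLocalRing.maximalIdeal A) (n : ℤ) (hn : n ≠ 0)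
    (ε : ℝ) (hε : 0 < ε) :
    (∫ t in orderedSimplex 2,
        algebraMap ℂ A (deriv (circlePath ε) (t 0) / circlePath ε (t 0)) *
          (-a * algebraMap ℂ A ((n : ℂ) * circlePath ε (t 1) ^ (n - 1) *
              deriv (circlePath ε) (t 1)) *
            Ring.inverse (1 - a * algebraMap ℂ A (circlePath ε (t 1) ^ n)))) =
      algebraMap ℂ A (2 * Real.pi * Complex.I) *
        logOneSub (a * algebraMap ℂ A ((ε : ℂ) ^ n)) := by
  set v := a * algebraMap ℂ A ((ε : ℂ) ^ n)
  obtain ⟨N, hN⟩ : IsNilpotent v := by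
    have := IsArtinianRing.of_finite ℂ A
    exact Commute.isNilpotent_mul_right (.all _ _)
      (Ring.KrullDimLE.isNilpotent_iff_mem_maximalIdeal.2 ha)
  have hint : ∀ k ∈ Finset.range N, IntegrableOn (fun t : Fin 2 → ℝ =>
      (-((2 * Real.pi * Complex.I) ^ 2 * n) *
        Complex.exp (2 * Real.pi * Complex.I * ((n * (k + 1) : ℤ) : ℂ) * t 1)) • v ^ (k + 1))
      (orderedSimplex 2) := fun k _ =>
    (by fun_prop : Continuous _).continuousOn.integrableOn_compact isCompact_orderedSimplex_two
  rw [setIntegral_congr_fun isCompact_orderedSimplex_two.measurableSet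
      fun t _ => circlePath_integrand_eq_sum hε.ne' a n hN (t 0) (t 1),
    integral_finsetSum _ hint, logOneSub_eq_sum hN, mul_neg, Finset.mul_sum,
    ← Finset.sum_neg_distrib]
  refine Finset.sum_congr rfl fun k _ => ?_
  have hnk : n * (k + 1) ≠ 0 := mul_ne_zero hn (by positivity)
  rw [integral_smul_const, integral_const_mul, setIntegral_orderedSimplex_two_exp hnk,
    ← Algebra.smul_def, smul_smul, ← neg_smul]
  congr 1
  push_cast
  field_simp [Real.pi_ne_zero, Int.cast_ne_zero.2 hn]

/-- Let `A` be a finite-dimensional commutative local `ℂ`-algebra (normed `ℂ`-algebra)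
with residue field `ℂ`, `a` in the maximal ideal (hence nilpotent), `n` a nonzero integer
and `γ (t) = ε e^{2πit}`.  The iterated integral of `dx/x` followed by
`d(1 - a x^n)/(1 - a x^n)` along `γ` equals `2πi log (1 - a ε^n)`. -/
theorem iteratedIntegral_dx_div_x_logDeriv
    (A : Type*) [NormedCommRing A] [NormedAlgebra ℂ A] [FiniteDimensional ℂ A]
    [IsLocalRing A]
    (hres : Function.Bijective ((IsLocalRing.residue A).comp (algebraMap ℂ A)))
    (a : A) (ha : a ∈ IsLocalRing.maximalIdeal A) (n : ℤ) (hn : n ≠ 0)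
    (ε : ℝ) (hε : 0 < ε) :
    (∫ t in orderedSimplex 2,
        algebraMap ℂ A (deriv (circlePath ε) (t 0) / circlePath ε (t 0)) *
          (-a * algebraMap ℂ A ((n : ℂ) * circlePath ε (t 1) ^ (n - 1) *
              deriv (circlePath ε) (t 1)) *
            Ring.inverse (1 - a * algebraMap ℂ A (circlePath ε (t 1) ^ n)))) =
      algebraMap ℂ A (2 * Real.pi * Complex.I) *
        logOneSub (a * algebraMap ℂ A ((ε : ℂ) ^ n)) :=
  iteratedIntegral_dx_div_x_logDeriv_general A a ha n hn ε hε
end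

section
/- Bimultiplicativity of the symbol: let A be a finite-dimensional commutative local ℂ-algebra with residue field ℂ, regarded as a normed ℂ-algebra, and let f, g, h : [0,1] → Aˣ be C¹ maps. With I(f,g) := ∫_{0 ≤ t₁ ≤ t₂ ≤ 1} f'(t₁)f(t₁)⁻¹ · g'(t₂)g(t₂)⁻¹ dt₁ dt₂, one has I(f, g·h) = I(f,g) + I(f,h) and I(f, g⁻¹) = −I(f,g); consequently exp((1/2πi)I(f,g·h)) = exp((1/2πi)I(f,g))·exp((1/2πi)I(f,h)) and exp((1/2πi)I(f,g⁻¹)) = exp((1/2πi)I(f,g))⁻¹. -/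
/-!
Pointwise, the logarithmic derivative turns products into sums and inverses into negatives:
`(gh)'(gh)⁻¹ = g'g⁻¹ + h'h⁻¹` and `(g⁻¹)'g = -g'g⁻¹`. Since `I(f, ·)` integrates
`f'(t₁)f(t₁)⁻¹` against the logarithmic derivative at `t₂`, it inherits both rules by
linearity of the integral; the integrands are continuous on the compact simplex, hence
integrable. The statements about `exp` follow because `exp` is a homomorphism from `(A, +)`
to `(Aˣ, ·)` in a commutative Banach algebra.
-/

open MeasureTheory

/-- `I(f,g) := ∫_{0 ≤ t₁ ≤ t₂ ≤ 1} f'(t₁) f(t₁)⁻¹ g'(t₂) g(t₂)⁻¹ dt₁ dt₂`,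
the iterated integral of the logarithmic derivatives. -/
noncomputable def logDerivPairing {A : Type*} [NormedCommRing A] [NormedAlgebra ℂ A]
    (f f' g g' : ℝ → A) : A :=
  ∫ t in orderedSimplex 2,
    f' (t 0) * Ring.inverse (f (t 0)) * (g' (t 1) * Ring.inverse (g (t 1)))

open Set
open scoped Ring

theorem isClosed_orderedSimplex (k : ℕ) : IsClosed (orderedSimplex k) := by
  simp only [orderedSimplex, ofPred_and, ofPred_forall]
  exact (isClosed_iInter fun i => isClosed_Icc.preimage (continuous_apply i)).inter
    (isClosed_iInter fun i => isClosed_iInter fun j => isClosed_iInter fun _ =>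
      isClosed_le (continuous_apply i) (continuous_apply j))

theorem isCompact_orderedSimplex (k : ℕ) : IsCompact (orderedSimplex k) :=
  isCompact_Icc.of_isClosed_subset (isClosed_orderedSimplex k)
    fun _ ht => ⟨fun i => (ht.1 i).1, fun i => (ht.1 i).2⟩

theorem ContinuousOn.ringInverse {X R : Type*} [TopologicalSpace X] [NormedRing R]
    [HasSummableGeomSeries R] {u : X → R} {s : Set X} (hu : ContinuousOn u s)
    (hunit : ∀ x ∈ s, IsUnit (u x)) : ContinuousOn (fun x => (u x)⁻¹ʳ) s := by
  intro x hx
  obtain ⟨v, hv⟩ := hunit x hx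
  exact (hv ▸ NormedRing.inverse_continuousAt v).comp_continuousWithinAt (hu x hx)

theorem integrableOn_orderedSimplex_two {E : Type*} [NormedRing E] {F G : ℝ → E}
    (hF : ContinuousOn F (Icc 0 1)) (hG : ContinuousOn G (Icc 0 1)) :
    IntegrableOn (fun t : Fin 2 → ℝ => F (t 0) * G (t 1)) (orderedSimplex 2) :=
  ((hF.comp (continuous_apply 0).continuousOn fun _ ht => ht.1 0).mul
    (hG.comp (continuous_apply 1).continuousOn fun _ ht => ht.1 1)).integrableOn_compact
      (isCompact_orderedSimplex 2)

namespace Ring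

variable {R : Type*} [CommRing R] {a b : R}

theorem logDeriv_mul_of_isUnit (a' b' : R) (ha : IsUnit a) (hb : IsUnit b) :
    (a' * b + a * b') * (a * b)⁻¹ʳ = a' * a⁻¹ʳ + b' * b⁻¹ʳ := by
  rw [mul_inverse_rev]
  linear_combination
    (a' * a⁻¹ʳ) * mul_inverse_cancel b hb + (b' * b⁻¹ʳ) * mul_inverse_cancel a ha

theorem logDeriv_inverse_of_isUnit (a' : R) (ha : IsUnit a) :
    -(a' * a⁻¹ʳ * a⁻¹ʳ) * a⁻¹ʳ⁻¹ʳ = -(a' * a⁻¹ʳ) := by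
  rw [inverse_inverse ha]
  linear_combination (-(a' * a⁻¹ʳ)) * inverse_mul_cancel a ha

end Ring

section LogDerivPairing

variable {A : Type*} [NormedCommRing A] [NormedAlgebra ℂ A] {f f' g g' h h' k k' : ℝ → A}

theorem logDerivPairing_eq_add_of_eqOn
    (hf : ContinuousOn (fun t => f' t * (f t)⁻¹ʳ) (Icc 0 1))
    (hg : ContinuousOn (fun t => g' t * (g t)⁻¹ʳ) (Icc 0 1))
    (hh : ContinuousOn (fun t => h' t * (h t)⁻¹ʳ) (Icc 0 1))
    (hk : EqOn (fun t => k' t * (k t)⁻¹ʳ) (fun t => g' t * (g t)⁻¹ʳ + h' t * (h t)⁻¹ʳ)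
      (Icc 0 1)) :
    logDerivPairing f f' k k' = logDerivPairing f f' g g' + logDerivPairing f f' h h' := by
  rw [logDerivPairing, logDerivPairing, logDerivPairing, ← integral_add
    (integrableOn_orderedSimplex_two hf hg) (integrableOn_orderedSimplex_two hf hh)]
  refine setIntegral_congr_fun (isClosed_orderedSimplex 2).measurableSet fun t ht => ?_
  rw [← mul_add]
  exact congrArg _ (hk (ht.1 1))

theorem logDerivPairing_eq_neg_of_eqOn
    (hk : EqOn (fun t => k' t * (k t)⁻¹ʳ) (fun t => -(g' t * (g t)⁻¹ʳ)) (Icc 0 1)) :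
    logDerivPairing f f' k k' = -logDerivPairing f f' g g' := by
  rw [logDerivPairing, logDerivPairing, ← integral_neg]
  refine setIntegral_congr_fun (isClosed_orderedSimplex 2).measurableSet fun t ht => ?_
  rw [← mul_neg]
  exact congrArg _ (hk (ht.1 1))

end LogDerivPairing

theorem symbol_bimultiplicative_general
    (A : Type*) [NormedCommRing A] [NormedAlgebra ℂ A] [FiniteDimensional ℂ A]
    (f f' g g' h h' : ℝ → A)
    (hf : ∀ t ∈ Set.Icc (0 : ℝ) 1, IsUnit (f t))
    (hg : ∀ t ∈ Set.Icc (0 : ℝ) 1, IsUnit (g t))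
    (hh : ∀ t ∈ Set.Icc (0 : ℝ) 1, IsUnit (h t))
    (hf' : ContinuousOn f' (Set.Icc 0 1)) (hg' : ContinuousOn g' (Set.Icc 0 1))
    (hh' : ContinuousOn h' (Set.Icc 0 1))
    (hfd : ∀ t ∈ Set.Icc (0 : ℝ) 1, HasDerivWithinAt f (f' t) (Set.Icc 0 1) t)
    (hgd : ∀ t ∈ Set.Icc (0 : ℝ) 1, HasDerivWithinAt g (g' t) (Set.Icc 0 1) t)
    (hhd : ∀ t ∈ Set.Icc (0 : ℝ) 1, HasDerivWithinAt h (h' t) (Set.Icc 0 1) t) :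
    (logDerivPairing f f' (fun t => g t * h t) (fun t => g' t * h t + g t * h' t) =
        logDerivPairing f f' g g' + logDerivPairing f f' h h') ∧
    (logDerivPairing f f' (fun t => Ring.inverse (g t))
        (fun t => -(g' t * Ring.inverse (g t) * Ring.inverse (g t))) =
      -logDerivPairing f f' g g') ∧
    (NormedSpace.exp (algebraMap ℂ A (2 * Real.pi * Complex.I)⁻¹ *
        logDerivPairing f f' (fun t => g t * h t) (fun t => g' t * h t + g t * h' t)) =
      NormedSpace.exp (algebraMap ℂ A (2 * Real.pi * Complex.I)⁻¹ *
          logDerivPairing f f' g g') *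
        NormedSpace.exp (algebraMap ℂ A (2 * Real.pi * Complex.I)⁻¹ *
          logDerivPairing f f' h h')) ∧
    (NormedSpace.exp (algebraMap ℂ A (2 * Real.pi * Complex.I)⁻¹ *
        logDerivPairing f f' (fun t => Ring.inverse (g t))
          (fun t => -(g' t * Ring.inverse (g t) * Ring.inverse (g t)))) =
      Ring.inverse (NormedSpace.exp (algebraMap ℂ A (2 * Real.pi * Complex.I)⁻¹ *
        logDerivPairing f f' g g'))) := by
  have : CompleteSpace A := FiniteDimensional.complete ℂ A
  let : NormedAlgebra ℚ A := .restrictScalars ℚ ℂ A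
  have logDeriv_continuousOn {u u' : ℝ → A} (hu : ∀ t ∈ Icc (0 : ℝ) 1, IsUnit (u t))
      (hu' : ContinuousOn u' (Icc 0 1))
      (hud : ∀ t ∈ Icc (0 : ℝ) 1, HasDerivWithinAt u (u' t) (Icc 0 1) t) :
      ContinuousOn (fun t => u' t * (u t)⁻¹ʳ) (Icc 0 1) :=
    hu'.mul (ContinuousOn.ringInverse (fun t ht => (hud t ht).continuousWithinAt) hu)
  have hmul := logDerivPairing_eq_add_of_eqOn (k := fun t => g t * h t)
    (logDeriv_continuousOn hf hf' hfd) (logDeriv_continuousOn hg hg' hgd)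
    (logDeriv_continuousOn hh hh' hhd)
    fun t ht => Ring.logDeriv_mul_of_isUnit (g' t) (h' t) (hg t ht) (hh t ht)
  have hinv := logDerivPairing_eq_neg_of_eqOn (f := f) (f' := f') (k := fun t => (g t)⁻¹ʳ)
    fun t ht => Ring.logDeriv_inverse_of_isUnit (g' t) (hg t ht)
  refine ⟨hmul, hinv, ?_, ?_⟩
  · rw [hmul, mul_add, NormedSpace.exp_add]
  · rw [hinv, mul_neg, Ring.inverse_exp]

/-- **Bimultiplicativity of the symbol**: for C¹ maps `f, g, h : [0,1] → Aˣ` into the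
units of a finite-dimensional commutative local `ℂ`-algebra `A` with residue field `ℂ`,
`I(f, g h) = I(f,g) + I(f,h)` and `I(f, g⁻¹) = −I(f,g)` (products and inverses taken
pointwise); consequently `exp ((2πi)⁻¹ I(f, g h)) = exp ((2πi)⁻¹ I(f,g)) exp ((2πi)⁻¹ I(f,h))`
and `exp ((2πi)⁻¹ I(f, g⁻¹)) = (exp ((2πi)⁻¹ I(f,g)))⁻¹`. -/
theorem symbol_bimultiplicative
    (A : Type*) [NormedCommRing A] [NormedAlgebra ℂ A] [FiniteDimensional ℂ A]
    [IsLocalRing A]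
    (hres : Function.Bijective ((IsLocalRing.residue A).comp (algebraMap ℂ A)))
    (f f' g g' h h' : ℝ → A)
    (hf : ∀ t ∈ Set.Icc (0 : ℝ) 1, IsUnit (f t))
    (hg : ∀ t ∈ Set.Icc (0 : ℝ) 1, IsUnit (g t))
    (hh : ∀ t ∈ Set.Icc (0 : ℝ) 1, IsUnit (h t))
    (hf' : ContinuousOn f' (Set.Icc 0 1)) (hg' : ContinuousOn g' (Set.Icc 0 1))
    (hh' : ContinuousOn h' (Set.Icc 0 1))
    (hfd : ∀ t ∈ Set.Icc (0 : ℝ) 1, HasDerivWithinAt f (f' t) (Set.Icc 0 1) t)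
    (hgd : ∀ t ∈ Set.Icc (0 : ℝ) 1, HasDerivWithinAt g (g' t) (Set.Icc 0 1) t)
    (hhd : ∀ t ∈ Set.Icc (0 : ℝ) 1, HasDerivWithinAt h (h' t) (Set.Icc 0 1) t) :
    (logDerivPairing f f' (fun t => g t * h t) (fun t => g' t * h t + g t * h' t) =
        logDerivPairing f f' g g' + logDerivPairing f f' h h') ∧
    (logDerivPairing f f' (fun t => Ring.inverse (g t))
        (fun t => -(g' t * Ring.inverse (g t) * Ring.inverse (g t))) =
      -logDerivPairing f f' g g') ∧
    (NormedSpace.exp (algebraMap ℂ A (2 * Real.pi * Complex.I)⁻¹ *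
        logDerivPairing f f' (fun t => g t * h t) (fun t => g' t * h t + g t * h' t)) =
      NormedSpace.exp (algebraMap ℂ A (2 * Real.pi * Complex.I)⁻¹ *
          logDerivPairing f f' g g') *
        NormedSpace.exp (algebraMap ℂ A (2 * Real.pi * Complex.I)⁻¹ *
          logDerivPairing f f' h h')) ∧
    (NormedSpace.exp (algebraMap ℂ A (2 * Real.pi * Complex.I)⁻¹ *
        logDerivPairing f f' (fun t => Ring.inverse (g t))
          (fun t => -(g' t * Ring.inverse (g t) * Ring.inverse (g t)))) =
      Ring.inverse (NormedSpace.exp (algebraMap ℂ A (2 * Real.pi * Complex.I)⁻¹ *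
        logDerivPairing f f' g g'))) :=
  symbol_bimultiplicative_general A f f' g g' h h' hf hg hh hf' hg' hh' hfd hgd hhd
end
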